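/- For the AND function on n bits and p ≤ 1/2, the distributional subcube partition complexity equals the distributional algorithmic complexity: sc(AND_n, π_p) = (1 − p^n)/(1 − p). -/

import Mathlib

open Classical

noncomputable section

/-- Flip the bits of `x` in the set `B`. -/
def flipOn {ι : Type*} [DecidableEq ι] (x : ι → Bool) (B : Finset ι) : ι → Bool :=
  fun i => if i ∈ B then !(x i) else x i

/-- Pointwise sensitivity of `f` at `x`. -/
def sensAt {ι : Type*} [Fintype ι] [DecidableEq ι] (f : (ι → Bool) → Bool)
    (x : ι → Bool) : ℕ :=
  (Finset.univ.filter fun i => f (flipOn x {i}) ≠ f x).card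

/-- Pointwise block sensitivity of `f` at `x`. -/
def bsAt {ι : Type*} [DecidableEq ι] (f : (ι → Bool) → Bool) (x : ι → Bool) : ℕ :=
  sSup {m | ∃ B : Fin m → Finset ι,
    (∀ j, f (flipOn x (B j)) ≠ f x) ∧ ∀ j k, j ≠ k → Disjoint (B j) (B k)}

/-- `W` is a witness set for `f` at `x`. -/
def IsWitness {ι : Type*} (f : (ι → Bool) → Bool) (x : ι → Bool) (W : Finset ι) : Prop :=
  ∀ y, (∀ i ∈ W, y i = x i) → f y = f x

/-- Pointwise minimum witness size of `f` at `x`. -/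
def witAt {ι : Type*} (f : (ι → Bool) → Bool) (x : ι → Bool) : ℕ :=
  sInf {k | ∃ W : Finset ι, W.card = k ∧ IsWitness f x W}

/-- Decision trees querying coordinates in `ι`. -/
inductive DTree (ι : Type*) where
  | leaf : DTree ι
  | node : ι → DTree ι → DTree ι → DTree ι

/-- The set of coordinates queried by the tree `T` on input `x`. -/
def DTree.path {ι : Type*} [DecidableEq ι] : DTree ι → (ι → Bool) → Finset ι
  | .leaf, _ => ∅
  | .node i t0 t1, x => insert i (if x i then t1.path x else t0.path x)

/-- The tree `T` determines `f`: at each leaf the queried bits witness the value of `f`. -/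
def DTree.Determines {ι : Type*} [DecidableEq ι] (T : DTree ι)
    (f : (ι → Bool) → Bool) : Prop :=
  ∀ x, IsWitness f x (T.path x)

/-- A partition of the hypercube into subcubes, encoded by the map sending each point to
the code (fixed coordinates) of its part. -/
structure SubcubePartition (ι : Type*) where
  code : (ι → Bool) → (ι → Option Bool)
  self_mem : ∀ x i b, code x i = some b → x i = b
  compat : ∀ x y, (∀ i b, code x i = some b → y i = b) → code y = code x

/-- Number of coordinates fixed by the subcube containing `x`. -/
def SubcubePartition.codim {ι : Type*} [Fintype ι] (P : SubcubePartition ι)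
    (x : ι → Bool) : ℕ :=
  (Finset.univ.filter fun i => (P.code x i).isSome).card

/-- The partition determines `f`, i.e. `f` is constant on each part. -/
def SubcubePartition.Determines {ι : Type*} (P : SubcubePartition ι)
    (f : (ι → Bool) → Bool) : Prop :=
  ∀ x y, (∀ i b, P.code x i = some b → y i = b) → f y = f x

/-- Deterministic sensitivity. -/
def detSens {ι : Type*} [Fintype ι] [DecidableEq ι] (f : (ι → Bool) → Bool) : ℕ :=
  Finset.univ.sup fun x => sensAt f x

/-- Deterministic block sensitivity. -/
def detBS {ι : Type*} [Fintype ι] [DecidableEq ι] (f : (ι → Bool) → Bool) : ℕ :=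
  Finset.univ.sup fun x => bsAt f x

/-- Deterministic witness complexity. -/
def detWit {ι : Type*} [Fintype ι] [DecidableEq ι] (f : (ι → Bool) → Bool) : ℕ :=
  Finset.univ.sup fun x => witAt f x

/-- Deterministic subcube partition complexity. -/
def detSC {ι : Type*} [Fintype ι] (f : (ι → Bool) → Bool) : ℕ :=
  sInf {k | ∃ P : SubcubePartition ι, P.Determines f ∧ ∀ x, P.codim x ≤ k}

/-- Deterministic algorithmic (decision tree) complexity. -/
def detAlg {ι : Type*} [Fintype ι] [DecidableEq ι] (f : (ι → Bool) → Bool) : ℕ :=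
  sInf {k | ∃ T : DTree ι, T.Determines f ∧ ∀ x, (T.path x).card ≤ k}

/-- Weight of the configuration `x` under the product Bernoulli(p) measure `π_p`. -/
def wt {ι : Type*} [Fintype ι] (p : ℝ) (x : ι → Bool) : ℝ :=
  ∏ i, (if x i then p else 1 - p)

/-- Expectation under `π_p`. -/
def expec {ι : Type*} [Fintype ι] [DecidableEq ι] (p : ℝ) (g : (ι → Bool) → ℝ) : ℝ :=
  ∑ x, wt p x * g x

/-- Distributional sensitivity. -/
def distSens {ι : Type*} [Fintype ι] [DecidableEq ι] (f : (ι → Bool) → Bool) (p : ℝ) : ℝ :=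
  expec p fun x => (sensAt f x : ℝ)

/-- Distributional block sensitivity. -/
def distBS {ι : Type*} [Fintype ι] [DecidableEq ι] (f : (ι → Bool) → Bool) (p : ℝ) : ℝ :=
  expec p fun x => (bsAt f x : ℝ)

/-- Distributional witness complexity. -/
def distWit {ι : Type*} [Fintype ι] [DecidableEq ι] (f : (ι → Bool) → Bool) (p : ℝ) : ℝ :=
  expec p fun x => (witAt f x : ℝ)

/-- Distributional subcube partition complexity. -/
def distSC {ι : Type*} [Fintype ι] [DecidableEq ι] (f : (ι → Bool) → Bool) (p : ℝ) : ℝ :=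
  sInf {c | ∃ P : SubcubePartition ι, P.Determines f ∧
    c = expec p fun x => (P.codim x : ℝ)}

/-- Distributional algorithmic complexity. -/
def distAlg {ι : Type*} [Fintype ι] [DecidableEq ι] (f : (ι → Bool) → Bool) (p : ℝ) : ℝ :=
  sInf {c | ∃ T : DTree ι, T.Determines f ∧
    c = expec p fun x => ((T.path x).card : ℝ)}

/-- `μ x J` is the joint probability that the bits equal `x` and the random set equals `J`;
the conditions say: the marginal of the bits is `π_p`, the random set is a.s. a witness set
for `f`, and the random set is local (conditionally on `{I = J}` and the bits on `J`, the
bits outside `J` are still i.i.d. Bernoulli(p)). -/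
def IsLocalWitnessSystem {ι : Type*} [Fintype ι] [DecidableEq ι]
    (f : (ι → Bool) → Bool) (p : ℝ) (μ : (ι → Bool) → Finset ι → ℝ) : Prop :=
  (∀ x J, 0 ≤ μ x J) ∧
  (∀ x, ∑ J, μ x J = wt p x) ∧
  (∀ x J, μ x J ≠ 0 → IsWitness f x J) ∧
  (∀ (J : Finset ι) x y, (∀ i ∈ J, x i = y i) → μ x J * wt p y = μ y J * wt p x)

/-- Distributional local witness complexity. -/
def distLocal {ι : Type*} [Fintype ι] [DecidableEq ι]
    (f : (ι → Bool) → Bool) (p : ℝ) : ℝ :=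
  sInf {c | ∃ μ : (ι → Bool) → Finset ι → ℝ, IsLocalWitnessSystem f p μ ∧
    c = ∑ x, ∑ J, μ x J * (J.card : ℝ)}

/-!
Every point of a part of a subcube partition stays in that part when a free coordinate is flipped,
so conditionally on the part the free coordinates are still i.i.d. Bernoulli(`p`): the expected
number of free zeros is `1 - p` times the expected number of free coordinates. If the partition
computes AND, a part containing a zero of `x` must fix one of them (otherwise it would also contain
the all-ones point), so `x` has at most `(Z - 1)⁺` free zeros, `Z` its number of zeros. Since
`E (Z - 1)⁺ = (1 - p) n - 1 + p ^ n`, the expected number of free coordinates is at most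
`n - (1 - p ^ n) / (1 - p)`. Equality holds for the partition into the leaves of the decision tree
reading the bits in order up to the first zero.
-/

open Finset

section BernoulliProduct

lemma flipOn_involutive {ι : Type*} [DecidableEq ι] (B : Finset ι) :
    Function.Involutive (flipOn · B) := fun x => by
  funext i
  by_cases hi : i ∈ B <;> simp [flipOn, hi]

lemma wt_nonneg {ι : Type*} [Fintype ι] {p : ℝ} (hp0 : 0 ≤ p) (hp1 : p ≤ 1) (x : ι → Bool) :
    0 ≤ wt p x :=
  prod_nonneg fun i _ => by cases x i <;> simp <;> linarith

variable {ι : Type*} [Fintype ι] [DecidableEq ι]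

lemma wt_flipOn_mul {p : ℝ} {x : ι → Bool} {i : ι} (hi : x i = true) :
    wt p (flipOn x {i}) * p = wt p x * (1 - p) := by
  have hoff : ∀ j ∈ ({i}ᶜ : Finset ι), flipOn x {i} j = x j := fun j hj => by
    simp_all [flipOn]
  simp only [wt, Fintype.prod_eq_mul_prod_compl i]
  rw [prod_congr rfl fun j hj => by rw [hoff j hj]]
  simp only [flipOn, mem_singleton, ↓reduceIte, hi, Bool.not_true, Bool.false_eq_true]
  ring

lemma sum_wt_filter_forall_true (p : ℝ) (S : Finset ι) :
    ∑ x with ∀ i ∈ S, x i = true, wt p x = p ^ #S := by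
  have hcyl : ({x | ∀ i ∈ S, x i = true} : Finset (ι → Bool)) =
      Fintype.piFinset fun i => if i ∈ S then {true} else univ := by
    ext x
    simp only [mem_filter, mem_univ, true_and, Fintype.mem_piFinset]
    refine forall_congr' fun i => ?_
    split_ifs with hi <;> simp [hi]
  simp only [hcyl, wt]
  rw [← prod_univ_sum (fun i => if i ∈ S then {true} else univ) fun _ b => if b then p else 1 - p,
    prod_congr rfl fun i _ => show ∑ b ∈ (if i ∈ S then {true} else univ),
      (if b then p else 1 - p) = if i ∈ S then p else 1 by split_ifs <;> simp]
  rw [prod_ite_mem, univ_inter, prod_const]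

lemma sum_wt (p : ℝ) : ∑ x : ι → Bool, wt p x = 1 := by
  simpa using sum_wt_filter_forall_true p (∅ : Finset ι)

/-- Flipping coordinate `i` matches the halves `x i = false` and `x i = true` of `E`, so by
`wt_flipOn_mul` their masses are in ratio `1 - p : p`. -/
lemma sum_wt_filter_false_of_flipOn (p : ℝ) (i : ι) (E : (ι → Bool) → Prop) [DecidablePred E]
    (hE : ∀ x, E (flipOn x {i}) ↔ E x) :
    ∑ x with E x ∧ x i = false, wt p x = (1 - p) * ∑ x with E x, wt p x := by
  set A := ∑ x with E x ∧ x i = false, wt p x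
  set B := ∑ x with E x ∧ x i = true, wt p x
  have hsplit : ∑ x with E x, wt p x = A + B := by
    simp only [A, B, sum_filter, ← sum_add_distrib]
    refine sum_congr rfl fun x _ => ?_
    cases x i <;> simp
  have hswap : A * p = B * (1 - p) := by
    simp only [A, B, sum_mul, sum_filter, ite_mul, zero_mul]
    rw [← (flipOn_involutive {i}).bijective.sum_comp]
    refine sum_congr rfl fun x _ => ?_
    simp only [hE]
    cases hx : x i
    · simp [flipOn, hx]
    · simp [flipOn, hx, wt_flipOn_mul hx]
  rw [hsplit]
  linear_combination hswap

lemma expec_card_filter (p : ℝ) (E : ι → (ι → Bool) → Prop) [∀ i, DecidablePred (E i)] :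
    expec p (fun x => (#{i | E i x} : ℝ)) = ∑ i, ∑ x with E i x, wt p x := by
  simp only [expec, natCast_card_filter, mul_sum, mul_boole, sum_filter]
  exact sum_comm

lemma expec_card_filter_false (p : ℝ) (E : ι → (ι → Bool) → Prop) [∀ i, DecidablePred (E i)]
    (hE : ∀ i x, E i (flipOn x {i}) ↔ E i x) :
    expec p (fun x => (#{i | E i x ∧ x i = false} : ℝ)) =
      (1 - p) * expec p (fun x => (#{i | E i x} : ℝ)) := by
  rw [expec_card_filter p (fun i x => E i x ∧ x i = false), expec_card_filter, mul_sum]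
  exact sum_congr rfl fun i _ => sum_wt_filter_false_of_flipOn p i (E i) (hE i)

lemma expec_const (p c : ℝ) : expec p (fun _ : ι → Bool => c) = c := by
  simp [expec, ← sum_mul, sum_wt]

lemma expec_card_false_sub_one (p : ℝ) :
    expec p (fun x : ι → Bool => ((#{i | x i = false} - 1 : ℕ) : ℝ)) =
      (1 - p) * Fintype.card ι - 1 + p ^ Fintype.card ι := by
  have htrunc : ∀ x : ι → Bool, ((#{i | x i = false} - 1 : ℕ) : ℝ) =
      #{i | x i = false} - 1 + if ∀ i, x i = true then 1 else 0 := by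
    intro x
    by_cases hall : ∀ i, x i = true
    · simp [hall]
    · obtain ⟨i, hi⟩ : ∃ i, x i = false := by simpa using hall
      have hpos : 1 ≤ #{i | x i = false} := card_pos.2 ⟨i, by simpa using hi⟩
      simp [Nat.cast_sub hpos, hall]
  have hzeros : expec p (fun x : ι → Bool => (#{i | x i = false} : ℝ)) =
      (1 - p) * Fintype.card ι := by
    simpa [expec_const] using expec_card_filter_false p (fun _ _ => True) (by simp)
  have hones : ∑ x : ι → Bool with ∀ i, x i = true, wt p x = p ^ Fintype.card ι := by
    simpa using sum_wt_filter_forall_true p (univ : Finset ι)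
  simp only [expec] at hzeros ⊢
  simp only [htrunc, mul_add, mul_sub, mul_one, mul_boole, sum_add_distrib, sum_sub_distrib,
    ← sum_filter, hzeros, sum_wt, hones]

end BernoulliProduct

namespace SubcubePartition

variable {ι : Type*} (P : SubcubePartition ι)

def freeCoords [Fintype ι] (x : ι → Bool) : Finset ι := {i | P.code x i = none}

lemma codim_add_card_freeCoords [Fintype ι] (x : ι → Bool) :
    P.codim x + #(P.freeCoords x) = Fintype.card ι := by
  simpa [codim, freeCoords] using card_filter_add_card_filter_not (s := univ)
    (fun i => (P.code x i).isSome)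

variable [DecidableEq ι]

lemma code_flipOn_of_eq_none {x : ι → Bool} {i : ι} (h : P.code x i = none) :
    P.code (flipOn x {i}) = P.code x :=
  P.compat x _ fun j b hj => by
    have hji : j ≠ i := by rintro rfl; simp [h] at hj
    simp [flipOn, hji, P.self_mem x j b hj]

lemma code_flipOn_eq_none_iff (x : ι → Bool) (i : ι) :
    P.code (flipOn x {i}) i = none ↔ P.code x i = none := by
  refine ⟨fun h => ?_, fun h => by rw [P.code_flipOn_of_eq_none h, h]⟩
  have h' := congrFun (P.code_flipOn_of_eq_none h) i
  rwa [h, show flipOn (flipOn x {i}) {i} = x from flipOn_involutive {i} x] at h'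

lemma expec_card_freeCoords_false [Fintype ι] (p : ℝ) :
    expec p (fun x => (#{i | P.code x i = none ∧ x i = false} : ℝ)) =
      (1 - p) * expec p (fun x => (#(P.freeCoords x) : ℝ)) :=
  expec_card_filter_false p (fun i x => P.code x i = none) fun i x => P.code_flipOn_eq_none_iff x i

end SubcubePartition

section AndFunction

variable {ι : Type*} {f : (ι → Bool) → Bool} (hf : ∀ x, f x = true ↔ ∀ i, x i = true)
include hf

lemma SubcubePartition.determines_and_of_code_true_isSome (P : SubcubePartition ι)
    (h : ∀ i, (P.code (fun _ => true) i).isSome) : P.Determines f := by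
  have hall : ∀ x y, P.code y = P.code x → (∀ i, x i = true) → ∀ i, y i = true := by
    intro x y hyx hx i
    obtain rfl : x = fun _ => true := funext hx
    obtain ⟨b, hb⟩ := Option.isSome_iff_exists.1 (h i)
    rw [P.self_mem y i b (hyx ▸ hb), ← P.self_mem _ i b hb]
  intro x y hxy
  have hyx := P.compat x y hxy
  exact Bool.eq_iff_iff.2 <| (hf y).trans <| (⟨hall y x hyx.symm, hall x y hyx⟩ : _ ↔ _).trans
    (hf x).symm

lemma SubcubePartition.exists_code_eq_some_false {P : SubcubePartition ι} (hP : P.Determines f)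
    {x : ι → Bool} (hx : ∃ i, x i = false) : ∃ i, P.code x i = some false := by
  by_contra! h
  have hx1 : f x = true := by
    rw [← hP x (fun _ => true) fun j b hj => ?_]
    · exact (hf _).2 fun _ => rfl
    · cases b
      · exact absurd hj (h j)
      · rfl
  obtain ⟨i, hi⟩ := hx
  simpa [hi] using (hf x).1 hx1 i

variable [Fintype ι] [DecidableEq ι]

lemma SubcubePartition.card_free_false_le {P : SubcubePartition ι} (hP : P.Determines f)
    (x : ι → Bool) : #{i | P.code x i = none ∧ x i = false} ≤ #{i | x i = false} - 1 := by
  by_cases hall : ∀ i, x i = true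
  · simp [hall]
  obtain ⟨i₀, hi₀⟩ := P.exists_code_eq_some_false hf hP (by simpa using hall)
  calc #{i | P.code x i = none ∧ x i = false}
      ≤ #(({i | x i = false} : Finset ι).erase i₀) := card_le_card fun j hj => by
        simp only [mem_filter, mem_univ, true_and, mem_erase] at hj ⊢
        exact ⟨by rintro rfl; simp [hj.1] at hi₀, hj.2⟩
    _ = #{i | x i = false} - 1 := card_erase_of_mem (by simp [P.self_mem x i₀ false hi₀])

theorem SubcubePartition.le_expec_codim_of_determines_and {p : ℝ} (hp0 : 0 ≤ p) (hp1 : p < 1)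
    (P : SubcubePartition ι) (hP : P.Determines f) :
    (1 - p ^ Fintype.card ι) / (1 - p) ≤ expec p (fun x => (P.codim x : ℝ)) := by
  have hcodim : expec p (fun x => (P.codim x : ℝ)) =
      Fintype.card ι - expec p (fun x => (#(P.freeCoords x) : ℝ)) := by
    have hpt : ∀ x, (P.codim x : ℝ) = Fintype.card ι - #(P.freeCoords x) := fun x =>
      eq_sub_of_add_eq (by exact_mod_cast P.codim_add_card_freeCoords x)
    simp only [expec, hpt, mul_sub, sum_sub_distrib, ← sum_mul, sum_wt, one_mul]
  have hfree := P.expec_card_freeCoords_false p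
  have hle : expec p (fun x => (#{i | P.code x i = none ∧ x i = false} : ℝ)) ≤
      expec p (fun x => ((#{i | x i = false} - 1 : ℕ) : ℝ)) :=
    sum_le_sum fun x _ => mul_le_mul_of_nonneg_left
      (Nat.cast_le.2 (P.card_free_false_le hf hP x)) (wt_nonneg hp0 hp1.le x)
  rw [expec_card_false_sub_one] at hle
  rw [div_le_iff₀ (sub_pos.2 hp1), hcodim]
  linarith

end AndFunction

section Sequential

variable {ι : Type*} [LinearOrder ι] [WellFoundedLT ι]

lemma forall_lt_true_iff_of_agree {x y : ι → Bool}
    (h : ∀ i, (∀ j < i, x j = true) → y i = x i) (i : ι) :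
    (∀ j < i, x j = true) ↔ ∀ j < i, y j = true := by
  refine ⟨fun hx j hj => (h j fun k hk => hx k (hk.trans hj)).trans (hx j hj), fun hy j => ?_⟩
  induction j using WellFoundedLT.induction with
  | _ j ih => exact fun hj => (h j fun k hk => ih k hk (hk.trans hj)).symm.trans (hy j hj)

def seqPartition (ι : Type*) [LinearOrder ι] [WellFoundedLT ι] : SubcubePartition ι where
  code x i := if ∀ j < i, x j = true then some (x i) else none
  self_mem x i b h := by
    split_ifs at h
    exact Option.some.inj h
  compat x y h := by
    have hxy : ∀ i, (∀ j < i, x j = true) → y i = x i := fun i hi => h i (x i) (if_pos hi)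
    funext i
    simp only [← forall_lt_true_iff_of_agree hxy i]
    split_ifs with hi
    · rw [hxy i hi]
    · rfl

lemma seqPartition_determines_and {f : (ι → Bool) → Bool}
    (hf : ∀ x, f x = true ↔ ∀ i, x i = true) : (seqPartition ι).Determines f :=
  (seqPartition ι).determines_and_of_code_true_isSome hf fun i => by simp [seqPartition]

end Sequential

lemma expec_codim_seqPartition {n : ℕ} {p : ℝ} (hp1 : p ≠ 1) :
    expec p (fun x => ((seqPartition (Fin n)).codim x : ℝ)) = (1 - p ^ n) / (1 - p) := by
  have hcodim : ∀ x, (seqPartition (Fin n)).codim x = #{i | ∀ j < i, x j = true} := fun x => by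
    simp only [SubcubePartition.codim, seqPartition]
    congr 1
    ext i
    by_cases hi : ∀ j < i, x j = true <;> simp [hi]
  simp only [hcodim, expec_card_filter]
  rw [sum_congr rfl fun i _ => by simpa using sum_wt_filter_forall_true p (Iio i)]
  rw [Fin.sum_univ_eq_sum_range (p ^ ·), geom_sum_eq hp1, ← neg_div_neg_eq, neg_sub, neg_sub]

theorem and_distSC_general (n : ℕ) (f : (Fin n → Bool) → Bool)
    (hf : ∀ x, f x = true ↔ ∀ i, x i = true) (p : ℝ) (hp0 : 0 ≤ p) (hp2 : p ≤ 1 / 2) :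
    distSC f p = (1 - p ^ n) / (1 - p) := by
  have hp1 : p < 1 := by linarith
  refine IsLeast.csInf_eq ⟨⟨seqPartition (Fin n), seqPartition_determines_and hf,
    (expec_codim_seqPartition hp1.ne).symm⟩, ?_⟩
  rintro c ⟨P, hP, rfl⟩
  simpa using P.le_expec_codim_of_determines_and hf hp0 hp1 hP

/-- for the AND function on `n` bits and `p ≤ 1/2`, the distributional
subcube partition complexity equals the distributional algorithmic complexity:
`sc(AND_n, π_p) = (1 - p^n)/(1 - p)`. -/
theorem and_distSC (n : ℕ) (hn : 1 ≤ n) (f : (Fin n → Bool) → Bool)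
    (hf : ∀ x, f x = true ↔ ∀ i, x i = true) (p : ℝ) (hp0 : 0 ≤ p) (hp2 : p ≤ 1 / 2) :
    distSC f p = (1 - p ^ n) / (1 - p) :=
  and_distSC_general n f hf p hp0 hp2
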